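/- arXiv:1508.00409 — 2 statements merged into one kernel-verified Lean document; each statement's English description precedes it below -/
import Mathlib

section
/- Let B ⊂ ℝ² be a bounded region with nonempty interior whose boundary ∂B is the image of a simple closed C² arclength-parametrized curve with bounded curvature, and let 1 ≤ q < ∞. Then ∫_{ℝ²} |h|^{−(2+q)} (∫_{ℝ²} |χ_B(x+2h) − 2χ_B(x+h) + χ_B(x)|^q dx) dh = ∞; in particular, the characteristic function χ_B does not belong to the Besov space B¹_{q,q}(ℝ²). -/
/-!
If exactly one of `y`, `y + h` lies in `B`, the second difference of `χ_B` at `y` with step `h`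
has absolute value at least `1`. Walking from a point of the bounded set `B` in steps of `h`, one
leaves `B` after at most `diam B / ‖h‖ + 1` steps, so that many translates of the jump set
`B ∆ (B - h)` cover `B`; hence the jump set, and with it the inner integral, is at least
`c ‖h‖` with `c > 0` since `|B| > 0`. The outer integral then dominates
`c ∫_{‖h‖<1} ‖h‖^{-(d+q-1)} dh`, which diverges for `q ≥ 1` in dimension `d`.
Measurability of `B` comes from its boundary being a `C¹` curve, which is null in the plane.
-/

open MeasureTheory Real Filter Set ENNReal

noncomputable section

/-- Partial derivative in the first coordinate. -/
def pd1 (f : ℝ × ℝ → ℝ) : ℝ × ℝ → ℝ := fun x => deriv (fun t => f (t, x.2)) x.1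

/-- Partial derivative in the second coordinate. -/
def pd2 (f : ℝ × ℝ → ℝ) : ℝ × ℝ → ℝ := fun x => deriv (fun t => f (x.1, t)) x.2

/-- The `L²(ℝ²)` inner product of two real-valued functions. -/
def L2inner (f g : ℝ × ℝ → ℝ) : ℝ := ∫ x : ℝ × ℝ, f x * g x

/-- The open unit square `(0,1)²`. -/
def unitSq : Set (ℝ × ℝ) := Ioo (0:ℝ) 1 ×ˢ Ioo (0:ℝ) 1

/-- `B` is a region whose boundary is the image of a simple closed `C^n` curve,
parametrized by arclength (period `len`), with curvature bounded by `v`. -/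
def IsCartoonRegion (n : ℕ∞) (v : ℝ) (B : Set (ℝ × ℝ)) : Prop :=
  ∃ (len : ℝ) (γ : ℝ → ℝ × ℝ), 0 < len ∧ ContDiff ℝ n γ ∧
    Function.Periodic γ len ∧
    (∀ s ∈ Ico (0:ℝ) len, ∀ t ∈ Ico (0:ℝ) len, γ s = γ t → s = t) ∧
    (∀ t, ‖deriv γ t‖ = 1) ∧
    (∀ t, ‖deriv (deriv γ) t‖ ≤ v) ∧
    frontier B = range γ

/-- `f = g₁ + χ_B g₂` is a cartoon-like function with the given data. -/
def CartoonWith (n : ℕ∞) (v : ℝ) (g₁ g₂ : ℝ × ℝ → ℝ) (B : Set (ℝ × ℝ))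
    (f : ℝ × ℝ → ℝ) : Prop :=
  ContDiff ℝ n g₁ ∧ ContDiff ℝ n g₂ ∧
  tsupport g₁ ⊆ unitSq ∧ tsupport g₂ ⊆ unitSq ∧ B ⊆ unitSq ∧
  IsCartoonRegion n v B ∧
  f = fun x => g₁ x + B.indicator (fun _ => (1:ℝ)) x * g₂ x

/-- `f` is cartoon-like with discontinuity region `B`. -/
def CartoonWithB (n : ℕ∞) (v : ℝ) (B : Set (ℝ × ℝ)) (f : ℝ × ℝ → ℝ) : Prop :=
  ∃ g₁ g₂, CartoonWith n v g₁ g₂ B f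

/-- `f ∈ E^n(v)`: the class of cartoon-like functions. -/
def Cartoon (n : ℕ∞) (v : ℝ) (f : ℝ × ℝ → ℝ) : Prop :=
  ∃ B, CartoonWithB n v B f

/-- `w` is the weak partial derivative `∂₁^a ∂₂^b u`. -/
def IsWeakPartialDeriv (a b : ℕ) (u w : ℝ × ℝ → ℝ) : Prop :=
  ∀ φ : ℝ × ℝ → ℝ, ContDiff ℝ (⊤ : ℕ∞) φ → HasCompactSupport φ →
    ∫ x : ℝ × ℝ, u x * (pd1^[a] (pd2^[b] φ)) x = (-1 : ℝ) ^ (a + b) * ∫ x : ℝ × ℝ, w x * φ x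

/-- `u ∈ E^{l,n}(v)`: all weak derivatives of order `l` exist and are cartoon-like of
smoothness `n`. -/
def MemElClass (l : ℕ) (n : ℕ∞) (v : ℝ) (u : ℝ × ℝ → ℝ) : Prop :=
  MemLp u 2 (volume : Measure (ℝ × ℝ)) ∧
  ∀ a b : ℕ, a + b = l → ∃ w, IsWeakPartialDeriv a b u w ∧ Cartoon n v w

/-- The shearlet elements `ψ_{j,k,m,ι}` for `ι = 1` (horizontal cone) and `ι = -1`
(vertical cone). -/
def shearEl (ψ : ℝ × ℝ → ℝ) (c₁ c₂ : ℝ) (j : ℕ) (k : ℤ) (m : ℤ × ℤ) (ι : ℤ) :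
    ℝ × ℝ → ℝ := fun x =>
  if ι = 1 then
    (2:ℝ) ^ (3 * (j:ℝ) / 4) *
      ψ ((2:ℝ) ^ (j:ℝ) * x.1 + (k:ℝ) * (2:ℝ) ^ ((j:ℝ)/2) * x.2 - c₁ * (m.1 : ℝ),
         (2:ℝ) ^ ((j:ℝ)/2) * x.2 - c₂ * (m.2 : ℝ))
  else
    (2:ℝ) ^ (3 * (j:ℝ) / 4) *
      ψ ((k:ℝ) * (2:ℝ) ^ ((j:ℝ)/2) * x.1 + (2:ℝ) ^ (j:ℝ) * x.2 - c₁ * (m.2 : ℝ),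
         (2:ℝ) ^ ((j:ℝ)/2) * x.1 - c₂ * (m.1 : ℝ))

/-- Indices `(j,k,m,ι)` of the cone-adapted shearlet system. -/
abbrev ShearIdx : Type := ℕ × ℤ × (ℤ × ℤ) × ℤ

/-- The admissibility condition on shearlet indices: `ι ∈ {0,1,-1}`, with `j = k = 0`
in the coarse case `ι = 0`, and `|k| ≤ 2^⌈j/2⌉` in the cone cases. -/
def inLambda (p : ShearIdx) : Prop :=
  (p.2.2.2 = 0 ∧ p.1 = 0 ∧ p.2.1 = 0) ∨
  ((p.2.2.2 = 1 ∨ p.2.2.2 = -1) ∧ |p.2.1| ≤ 2 ^ ((p.1 + 1) / 2))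

/-- The index set `Λ` of the cone-adapted shearlet system. -/
def Lambda : Type := {p : ShearIdx // inLambda p}

/-- The full cone-adapted shearlet system `SH(φ, ψ, ψ̃, c)`. -/
def shearSys (φ ψ : ℝ × ℝ → ℝ) (c₁ c₂ : ℝ) (p : ShearIdx) : ℝ × ℝ → ℝ :=
  if p.2.2.2 = 0 then fun x => φ (x.1 - c₁ * (p.2.2.1.1 : ℝ), x.2 - c₁ * (p.2.2.1.2 : ℝ))
  else shearEl ψ c₁ c₂ p.1 p.2.1 p.2.2.1 p.2.2.2

/-- `θ(x₁,x₂) = θ₁(x₁)θ₂(x₂)` is separable. -/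
def SeparableFun (θ : ℝ × ℝ → ℝ) : Prop :=
  ∃ θ₁ θ₂ : ℝ → ℝ, ∀ x : ℝ × ℝ, θ x = θ₁ x.1 * θ₂ x.2

/-- The 2D Fourier transform. -/
def fourier2 (θ : ℝ × ℝ → ℝ) (ξ : ℝ × ℝ) : ℂ :=
  ∫ x : ℝ × ℝ, Complex.exp (-2 * Real.pi * Complex.I * (x.1 * ξ.1 + x.2 * ξ.2)) * (θ x : ℂ)

/-- The Fourier decay conditions (i) and (ii) on the shearlet generator `θ`. -/
def FourierDecayConds (θ : ℝ × ℝ → ℝ) : Prop :=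
  ∃ (τ ν C₀ : ℝ) (h : ℝ → ℝ), 5 < τ ∧ 4 ≤ ν ∧ 0 < C₀ ∧ Integrable h ∧
    (∀ ξ : ℝ × ℝ, ξ.2 ≠ 0 → ‖fourier2 θ ξ‖ ≤
      C₀ * min 1 (|ξ.1| ^ τ) * min 1 (|ξ.1| ^ (-ν)) * min 1 (|ξ.2| ^ (-ν))) ∧
    (∀ ξ : ℝ × ℝ, ξ.1 ≠ 0 → ‖deriv (fun t => fourier2 θ (ξ.1, t)) ξ.2‖ ≤
      |h ξ.1| * (1 + |ξ.2 / ξ.1|) ^ (-ν))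

/-- `θ` has `M` vanishing moments in the `x₁`-direction. -/
def VanishingMomentsX1 (M : ℕ) (θ : ℝ × ℝ → ℝ) : Prop :=
  ∀ x₂ : ℝ, ∀ n : ℕ, n < M → ∫ t : ℝ, t ^ n * θ (t, x₂) = 0

/-- Unconditional convergence of `∑ F i` to `g` in `L²(ℝ²)`. -/
def HasL2Sum {I : Type*} (F : I → ℝ × ℝ → ℝ) (g : ℝ × ℝ → ℝ) : Prop :=
  Tendsto (fun s : Finset I => eLpNorm (fun x => g x - ∑ i ∈ s, F i x) 2 volume)
    atTop (nhds 0)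

/-- `(Ψ i)` is a frame for `L²(ℝ²)`. -/
def IsFrameFamily {I : Type*} (Ψ : I → ℝ × ℝ → ℝ) : Prop :=
  ∃ A B : ℝ, 0 < A ∧ A ≤ B ∧ ∀ f : ℝ × ℝ → ℝ, MemLp f 2 (volume : Measure (ℝ × ℝ)) →
    A * ∫ x : ℝ × ℝ, f x ^ 2 ≤ ∑' i, (L2inner f (Ψ i)) ^ 2 ∧
    ∑' i, (L2inner f (Ψ i)) ^ 2 ≤ B * ∫ x : ℝ × ℝ, f x ^ 2

/-- `(Ψd i)` is a dual family for `(Ψ i)`: the synthesis operator is bounded and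
one has the reconstruction formula `f = ∑ ⟨f, Ψ i⟩ Ψd i` in `L²`. -/
def IsDualFamily {I : Type*} (Ψ Ψd : I → ℝ × ℝ → ℝ) : Prop :=
  (∃ C : ℝ, 0 < C ∧ ∀ c : I → ℝ, Summable (fun i => (c i) ^ 2) →
    ∃ g : ℝ × ℝ → ℝ, MemLp g 2 (volume : Measure (ℝ × ℝ)) ∧
      HasL2Sum (fun i x => c i * Ψd i x) g ∧
      ∫ x : ℝ × ℝ, g x ^ 2 ≤ C ^ 2 * ∑' i, (c i) ^ 2) ∧
  ∀ f : ℝ × ℝ → ℝ, MemLp f 2 (volume : Measure (ℝ × ℝ)) →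
    Summable (fun i => (L2inner f (Ψ i)) ^ 2) ∧
    HasL2Sum (fun i x => L2inner f (Ψ i) * Ψd i x) f

/-- The metric on the torus `[-π/2, π/2]`. -/
def torusDist (a b : ℝ) : ℝ := min |a - b| (π + min a b - max a b)

/-- The angle `arctan(s^ι)`, with the convention `arctan(1/0) = π/2`. -/
def slopeAngle (ι : ℤ) (s : ℝ) : ℝ :=
  if ι = 1 then arctan s else if s = 0 then π / 2 else arctan s⁻¹

/-- `s^ι`: `s` for `ι = 1` and `1/s` for `ι = -1`. -/
def sPow (ι : ℤ) (s : ℝ) : ℝ := if ι = 1 then s else s⁻¹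

/-- The unit normal of an arclength-parametrized curve: the rotation of the unit
tangent by `π/2`. -/
def normalAt (γ : ℝ → ℝ × ℝ) (s : ℝ) : ℝ × ℝ := (-(deriv γ s).2, (deriv γ s).1)

open scoped symmDiff

section SecondDifference

variable {E : Type*} [AddMonoid E]

def secondDiff (f : E → ℝ) (h x : E) : ℝ := f (x + 2 • h) - 2 * f (x + h) + f x

theorem exists_lt_add_nsmul_mem_symmDiff {S : Set E} {x h : E} {n : ℕ} (hx : x ∈ S)
    (hxn : x + n • h ∉ S) : ∃ k < n, x + k • h ∈ S ∆ ((· + h) ⁻¹' S) := by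
  induction n with
  | zero => simp_all
  | succ n ih =>
    by_cases hn : x + n • h ∈ S
    · refine ⟨n, n.lt_succ_self, Or.inl ⟨hn, ?_⟩⟩
      simpa [succ_nsmul, add_assoc] using hxn
    · obtain ⟨k, hk, hmem⟩ := ih hn
      exact ⟨k, hk.trans n.lt_succ_self, hmem⟩

theorem one_le_abs_secondDiff_indicator {S : Set E} {h y : E}
    (hy : y ∈ S ∆ ((· + h) ⁻¹' S)) : 1 ≤ |secondDiff (S.indicator 1) h y| := by
  classical
  unfold secondDiff
  rcases hy with ⟨hy, hyh⟩ | ⟨hyh, hy⟩ <;>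
    simp only [Set.mem_preimage] at hy hyh <;>
    by_cases h2 : y + 2 • h ∈ S <;>
    simp [Set.indicator_of_mem, Set.indicator_of_notMem, *] <;> norm_num

end SecondDifference

section Translation

variable {E : Type*} [AddGroup E] [MeasurableSpace E] [MeasurableAdd E] {μ : Measure E}
  [μ.IsAddRightInvariant]

theorem measure_symmDiff_le_lintegral_secondDiff_indicator {S : Set E}
    (hS : NullMeasurableSet S μ) (h : E) {q : ℝ} (hq : 0 ≤ q) :
    μ (S ∆ ((· + h) ⁻¹' S)) ≤ ∫⁻ x, ENNReal.ofReal (|secondDiff (S.indicator 1) h x| ^ q) ∂μ := by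
  have hZ : NullMeasurableSet (S ∆ ((· + h) ⁻¹' S)) μ :=
    hS.symmDiff (hS.preimage (measurePreserving_add_right μ h).quasiMeasurePreserving)
  rw [← lintegral_indicator_one₀ hZ]
  refine lintegral_mono fun x => ?_
  by_cases hx : x ∈ S ∆ ((· + h) ⁻¹' S)
  · rw [Set.indicator_of_mem hx, Pi.one_apply, ← ENNReal.ofReal_one]
    exact ENNReal.ofReal_le_ofReal (Real.one_le_rpow (one_le_abs_secondDiff_indicator hx) hq)
  · simp [Set.indicator_of_notMem hx]

end Translation

section JumpSet

variable {E : Type*} [NormedAddCommGroup E] [NormedSpace ℝ E] [MeasurableSpace E]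
  [MeasurableAdd E] {μ : Measure E} [μ.IsAddRightInvariant]

theorem measure_mul_norm_le_measure_symmDiff_preimage_add {S : Set E}
    (hS : Bornology.IsBounded S) (h : E) :
    μ S * ENNReal.ofReal ‖h‖ ≤
      ENNReal.ofReal (Metric.diam S + ‖h‖) * μ (S ∆ ((· + h) ⁻¹' S)) := by
  rcases eq_or_ne h 0 with rfl | hh
  · simp
  have hpos : 0 < ‖h‖ := norm_pos_iff.2 hh
  set n : ℕ := ⌊Metric.diam S / ‖h‖⌋₊ + 1
  have hn_gt : Metric.diam S < n * ‖h‖ :=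
    (div_lt_iff₀ hpos).1 (by push_cast [n]; exact Nat.lt_floor_add_one _)
  have hn_le : n * ‖h‖ ≤ Metric.diam S + ‖h‖ := by
    have := (le_div_iff₀ hpos).1 (Nat.floor_le (div_nonneg (Metric.diam_nonneg (s := S)) hpos.le))
    push_cast [n]; linarith
  have hcover : S ⊆ ⋃ k ∈ Finset.range n, (· + k • h) ⁻¹' (S ∆ ((· + h) ⁻¹' S)) := by
    intro x hx
    have hxn : x + n • h ∉ S := fun hxn => by
      have := Metric.dist_le_diam_of_mem hS hxn hx
      rw [dist_eq_norm, add_sub_cancel_left, RCLike.norm_nsmul ℝ, nsmul_eq_mul] at this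
      linarith
    obtain ⟨k, hk, hmem⟩ := exists_lt_add_nsmul_mem_symmDiff hx hxn
    exact Set.mem_biUnion (Finset.mem_range.2 hk) hmem
  calc μ S * ENNReal.ofReal ‖h‖
      ≤ (n * μ (S ∆ ((· + h) ⁻¹' S))) * ENNReal.ofReal ‖h‖ := by
        gcongr
        refine (measure_mono hcover).trans ((measure_biUnion_finset_le _ _).trans_eq ?_)
        simp only [measure_preimage_add_right, Finset.sum_const, Finset.card_range, nsmul_eq_mul]
    _ = ENNReal.ofReal (n * ‖h‖) * μ (S ∆ ((· + h) ⁻¹' S)) := by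
        rw [ENNReal.ofReal_mul (Nat.cast_nonneg n), ENNReal.ofReal_natCast]; ring
    _ ≤ ENNReal.ofReal (Metric.diam S + ‖h‖) * μ (S ∆ ((· + h) ⁻¹' S)) := by
        gcongr

theorem measure_mul_norm_le_lintegral_secondDiff_indicator {S : Set E}
    (hS : Bornology.IsBounded S) (hSm : NullMeasurableSet S μ) (h : E) {q : ℝ} (hq : 0 ≤ q) :
    μ S * ENNReal.ofReal ‖h‖ ≤ ENNReal.ofReal (Metric.diam S + ‖h‖) *
      ∫⁻ x, ENNReal.ofReal (|secondDiff (S.indicator 1) h x| ^ q) ∂μ :=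
  (measure_mul_norm_le_measure_symmDiff_preimage_add hS h).trans <| by
    gcongr
    exact measure_symmDiff_le_lintegral_secondDiff_indicator hSm h hq

end JumpSet

section FiniteDimensional

variable {E : Type*} [NormedAddCommGroup E] [NormedSpace ℝ E] [FiniteDimensional ℝ E]
  [MeasurableSpace E] [BorelSpace E] (μ : Measure E) [μ.IsAddHaarMeasure]

theorem addHaar_range_eq_zero_of_differentiable (hE : 1 < Module.finrank ℝ E) {γ : ℝ → E}
    (hγ : Differentiable ℝ γ) : μ (range γ) = 0 := by
  have : Nontrivial E := Module.nontrivial_of_finrank_pos (R := ℝ) (by omega)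
  obtain ⟨v, hv⟩ := exists_norm_eq E zero_le_one
  have hv0 : v ≠ 0 := norm_ne_zero_iff.1 (by simp [hv])
  obtain ⟨g, -, hgv⟩ := exists_dual_vector ℝ v (by simp [hv])
  have hline : (ℝ ∙ v) ≠ ⊤ := fun htop => by
    have := finrank_span_singleton (K := ℝ) hv0
    rw [htop, finrank_top] at this
    omega
  -- `γ ∘ g` maps the null line `ℝ ∙ v` onto the curve, since `g (t • v) = t`.
  have hrange : range γ ⊆ (γ ∘ g) '' (ℝ ∙ v) := by
    rintro _ ⟨t, rfl⟩
    refine ⟨t • v, Submodule.smul_mem _ t (Submodule.mem_span_singleton_self v), ?_⟩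
    simp [hgv, hv]
  exact measure_mono_null hrange <|
    addHaar_image_eq_zero_of_differentiableOn_of_addHaar_eq_zero μ
      (hγ.comp g.differentiable).differentiableOn (Measure.addHaar_submodule μ _ hline)

theorem lintegral_ball_rpow_neg_norm_eq_top [Nontrivial E] {r α : ℝ} (hr : 0 < r)
    (hα : Module.finrank ℝ E ≤ α) :
    ∫⁻ x in Metric.ball 0 r, ENNReal.ofReal (‖x‖ ^ (-α)) ∂μ = ⊤ := by
  have hd : 1 ≤ Module.finrank ℝ E := Module.finrank_pos
  have hnot : ¬ IntegrableOn (fun x : E => ‖x‖ ^ (-α)) (Metric.ball 0 r) μ := by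
    rw [integrableOn_fun_norm_addHaar μ (f := fun y => y ^ (-α)),
      integrableOn_congr_fun (g := fun y : ℝ => y ^ ((Module.finrank ℝ E : ℝ) - 1 - α)) _
        measurableSet_Ioo, intervalIntegral.integrableOn_Ioo_rpow_iff hr]
    · linarith
    · intro y hy
      dsimp only
      rw [smul_eq_mul, ← Real.rpow_natCast, ← Real.rpow_add hy.1, Nat.cast_sub hd]
      ring_nf
  by_contra hfin
  exact hnot ⟨(measurable_norm.pow_const _).aestronglyMeasurable,
    (hasFiniteIntegral_iff_ofReal (ae_of_all _ fun x => by positivity)).2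
      (lt_top_iff_ne_top.2 hfin)⟩

/-- `|f|_{B¹_{q,q}}^q`, the `q`-th power of the Besov seminorm of smoothness `1`. -/
def besovOneIntegral (q : ℝ) (f : E → ℝ) : ℝ≥0∞ :=
  ∫⁻ h, ENNReal.ofReal (‖h‖ ^ (-((Module.finrank ℝ E : ℝ) + q))) *
    ∫⁻ x, ENNReal.ofReal (|secondDiff f h x| ^ q) ∂μ ∂μ

theorem besovOneIntegral_indicator_eq_top [Nontrivial E] {S : Set E}
    (hS : Bornology.IsBounded S) (hSm : NullMeasurableSet S μ) (hS0 : μ S ≠ 0) {q : ℝ}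
    (hq : 1 ≤ q) : besovOneIntegral μ q (S.indicator 1) = ⊤ := by
  set d : ℝ := (Module.finrank ℝ E : ℝ)
  set D := Metric.diam S
  set I : E → ℝ≥0∞ := fun h =>
    ∫⁻ x, ENNReal.ofReal (|secondDiff (S.indicator 1) h x| ^ q) ∂μ
  have hd : 1 ≤ d := Nat.one_le_cast.2 Module.finrank_pos
  have hpoint : ∀ h ∈ Metric.ball (0 : E) 1,
      μ S * ENNReal.ofReal (‖h‖ ^ (-(d + q - 1))) ≤
        ENNReal.ofReal (D + 1) * (ENNReal.ofReal (‖h‖ ^ (-(d + q))) * I h) := by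
    intro h hh
    have hh1 : ‖h‖ ≤ 1 := (mem_ball_zero_iff.1 hh).le
    have hexp : ‖h‖ ^ (-(d + q - 1)) = ‖h‖ ^ (-(d + q)) * ‖h‖ := by
      rw [← Real.rpow_add_one' (norm_nonneg h) (by linarith)]; ring_nf
    calc μ S * ENNReal.ofReal (‖h‖ ^ (-(d + q - 1)))
        = ENNReal.ofReal (‖h‖ ^ (-(d + q))) * (μ S * ENNReal.ofReal ‖h‖) := by
          rw [hexp, ENNReal.ofReal_mul (by positivity)]; ring
      _ ≤ ENNReal.ofReal (‖h‖ ^ (-(d + q))) * (ENNReal.ofReal (D + 1) * I h) := by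
          gcongr _ * ?_
          exact (measure_mul_norm_le_lintegral_secondDiff_indicator hS hSm h
            (zero_le_one.trans hq)).trans (by gcongr)
      _ = _ := mul_left_comm _ _ _
  have hball :
      μ S * ∫⁻ h in Metric.ball 0 1, ENNReal.ofReal (‖h‖ ^ (-(d + q - 1))) ∂μ = ⊤ := by
    rw [lintegral_ball_rpow_neg_norm_eq_top μ one_pos (by linarith), ENNReal.mul_top hS0]
  have htop : ENNReal.ofReal (D + 1) * besovOneIntegral μ q (S.indicator 1) = ⊤ := by
    rw [eq_top_iff, ← hball]
    calc μ S * ∫⁻ h in Metric.ball 0 1, ENNReal.ofReal (‖h‖ ^ (-(d + q - 1))) ∂μ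
        = ∫⁻ h in Metric.ball 0 1, μ S * ENNReal.ofReal (‖h‖ ^ (-(d + q - 1))) ∂μ :=
          (lintegral_const_mul' _ _ hS.measure_lt_top.ne).symm
      _ ≤ ∫⁻ h in Metric.ball 0 1,
            ENNReal.ofReal (D + 1) * (ENNReal.ofReal (‖h‖ ^ (-(d + q))) * I h) ∂μ :=
          setLIntegral_mono' measurableSet_ball hpoint
      _ ≤ ∫⁻ h, ENNReal.ofReal (D + 1) * (ENNReal.ofReal (‖h‖ ^ (-(d + q))) * I h) ∂μ :=
          setLIntegral_le_lintegral _ _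
      _ = ENNReal.ofReal (D + 1) * besovOneIntegral μ q (S.indicator 1) :=
          lintegral_const_mul' _ _ ENNReal.ofReal_ne_top
  exact ((ENNReal.mul_eq_top.1 htop).resolve_right fun h => ENNReal.ofReal_ne_top h.1).2

end FiniteDimensional

theorem IsCartoonRegion.volume_frontier_eq_zero {n : ℕ∞} {v : ℝ} {B : Set (ℝ × ℝ)}
    (hn : n ≠ 0) (hB : IsCartoonRegion n v B) : volume (frontier B) = 0 := by
  obtain ⟨-, γ, -, hγ, -, -, -, -, hfront⟩ := hB
  rw [hfront]
  exact addHaar_range_eq_zero_of_differentiable volume (by simp)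
    (hγ.differentiable (by exact_mod_cast hn))

/-- the Besov seminorm integral of order `1` of the characteristic
function of a region with `C²` boundary diverges, i.e. `χ_B ∉ B¹_{q,q}(ℝ²)`. -/
theorem indicator_not_in_besov
    (B : Set (ℝ × ℝ)) (hBbd : Bornology.IsBounded B)
    (hBint : (interior B).Nonempty)
    (v : ℝ) (hB : IsCartoonRegion 2 v B)
    (q : ℝ) (hq : 1 ≤ q) :
    ∫⁻ h : ℝ × ℝ,
        ENNReal.ofReal (‖h‖ ^ (-(2 + q))) *
        ∫⁻ x : ℝ × ℝ, ENNReal.ofReal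
          (|B.indicator (fun _ => (1:ℝ)) (x + 2 • h) -
            2 * B.indicator (fun _ => (1:ℝ)) (x + h) +
            B.indicator (fun _ => (1:ℝ)) x| ^ q) = ⊤ := by
  have hfrontier := hB.volume_frontier_eq_zero (by norm_num)
  have hbesov := besovOneIntegral_indicator_eq_top volume hBbd
    (nullMeasurableSet_of_null_frontier hfrontier)
    (Measure.measure_pos_of_nonempty_interior volume hBint).ne' hq
  have hdim : (Module.finrank ℝ (ℝ × ℝ) : ℝ) = 2 := by simp
  rwa [besovOneIntegral, hdim] at hbesov

end
end

section
/- Let Γ ⊂ (0,1)² be the image of a simple closed C² curve γ : [0, L_Γ] → ℝ² parametrized by arclength (so its length is L_Γ) with curvature bounded by v. Let ψ ∈ L²(ℝ²) be compactly supported and let c = (c₁,c₂) with c₁,c₂ > 0. Then there exists a constant C > 0, depending only on L_Γ, v, the support of ψ and c (but not on j), such that for every j ∈ ℕ₀ the number of pairs (k,m) with k ∈ ℤ, |k| ≤ 2^{⌈j/2⌉}, m ∈ ℤ², for which supp ψ_{j,k,m,1} ∩ Γ ≠ ∅, is at most C · 2^{3j/2}. -/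
/-!
If `supp ψ ⊆ [-R, R]²`, the support of `ψ_{j,k,m,1}` lies in the set of `x` with
`‖S_k A_j x - M_c m‖∞ ≤ R`. Sample `Γ` at `N = ⌈L_Γ 2^j⌉` arclength-equidistant points; as `γ`
is 1-Lipschitz, every point of `Γ` is within `2^{-j}` of a sample. Since
`|k| ≤ 2^{⌈j/2⌉} ≤ 2 · 2^{j/2}`, the map `S_k A_j` has sup-norm Lipschitz constant at most
`3 · 2^j`, so if `ψ_{j,k,m,1}` meets `Γ` near the sample `γ(t_i)`, then `M_c m` lies within
`R + 3` of `S_k A_j γ(t_i)`: there are `O(1)` such `m` for each pair `(k, i)`. There are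
`O(2^{j/2})` shears and `O(2^j)` samples, which gives `O(2^{3j/2})`.
-/

open MeasureTheory Real Filter Set ENNReal

noncomputable section

theorem two_rpow_half_mul_self (j : ℕ) :
    (2:ℝ) ^ ((j:ℝ) / 2) * 2 ^ ((j:ℝ) / 2) = 2 ^ (j:ℝ) := by
  rw [← Real.rpow_add two_pos]
  ring_nf

theorem two_pow_half_succ_le (j : ℕ) : (2:ℝ) ^ ((j + 1) / 2) ≤ 2 * 2 ^ ((j:ℝ) / 2) := by
  have hexp : (((j + 1) / 2 : ℕ) : ℝ) ≤ (j:ℝ) / 2 + 1 := by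
    have : (((j + 1) / 2 : ℕ) : ℝ) * 2 ≤ j + 1 := by exact_mod_cast Nat.div_mul_le_self (j + 1) 2
    linarith
  calc (2:ℝ) ^ ((j + 1) / 2) = 2 ^ (((j + 1) / 2 : ℕ) : ℝ) := (Real.rpow_natCast _ _).symm
    _ ≤ 2 ^ ((j:ℝ) / 2 + 1) := Real.rpow_le_rpow_of_exponent_le one_le_two hexp
    _ = 2 * 2 ^ ((j:ℝ) / 2) := by rw [Real.rpow_add two_pos, Real.rpow_one, mul_comm]

theorem card_Icc_two_pow_half_succ_le (j : ℕ) :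
    ((Finset.Icc (-(2:ℤ) ^ ((j + 1) / 2)) (2 ^ ((j + 1) / 2))).card : ℝ) ≤
      5 * 2 ^ ((j:ℝ) / 2) := by
  rw [Int.card_Icc, ← Int.cast_natCast,
    Int.toNat_of_nonneg (by linarith [pow_nonneg zero_le_two ((j + 1) / 2) (M₀ := ℤ)])]
  push_cast
  have : (1:ℝ) ≤ 2 ^ ((j:ℝ) / 2) := Real.one_le_rpow one_le_two (by positivity)
  linarith [two_pow_half_succ_le j]

theorem natCeil_mul_two_rpow_le {len : ℝ} (hlen : 0 ≤ len) (j : ℕ) :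
    (⌈len * 2 ^ (j:ℝ)⌉₊ : ℝ) ≤ (len + 1) * 2 ^ (j:ℝ) := by
  have : (1:ℝ) ≤ 2 ^ (j:ℝ) := Real.one_le_rpow one_le_two (by positivity)
  linarith [Nat.ceil_lt_add_one (show 0 ≤ len * 2 ^ (j:ℝ) by positivity)]

/-- The matrix `S_k A_j`. -/
def shearScale (j : ℕ) (k : ℤ) (x : ℝ × ℝ) : ℝ × ℝ :=
  (2 ^ (j:ℝ) * x.1 + k * 2 ^ ((j:ℝ) / 2) * x.2, 2 ^ ((j:ℝ) / 2) * x.2)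

/-- The translation vector `M_c m`. -/
def latticePt (c₁ c₂ : ℝ) (m : ℤ × ℤ) : ℝ × ℝ := (c₁ * m.1, c₂ * m.2)

theorem shearEl_one_eq (ψ : ℝ × ℝ → ℝ) (c₁ c₂ : ℝ) (j : ℕ) (k : ℤ) (m : ℤ × ℤ) :
    shearEl ψ c₁ c₂ j k m 1 =
      fun x => 2 ^ (3 * (j:ℝ) / 4) * ψ (shearScale j k x - latticePt c₁ c₂ m) := by
  funext x
  simp only [shearEl, if_true]
  rfl

theorem continuous_shearScale (j : ℕ) (k : ℤ) : Continuous (shearScale j k) := by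
  unfold shearScale
  fun_prop

theorem shearScale_sub (j : ℕ) (k : ℤ) (x y : ℝ × ℝ) :
    shearScale j k x - shearScale j k y = shearScale j k (x - y) := by
  ext <;> simp only [shearScale, Prod.fst_sub, Prod.snd_sub] <;> ring

theorem norm_shearScale_le {j : ℕ} {k : ℤ} (hk : |k| ≤ 2 ^ ((j + 1) / 2)) (x : ℝ × ℝ) :
    ‖shearScale j k x‖ ≤ 3 * 2 ^ (j:ℝ) * ‖x‖ := by
  have hk' : |(k:ℝ)| * 2 ^ ((j:ℝ) / 2) ≤ 2 * 2 ^ (j:ℝ) := by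
    have : |(k:ℝ)| ≤ 2 * 2 ^ ((j:ℝ) / 2) :=
      (show |(k:ℝ)| ≤ 2 ^ ((j + 1) / 2) by exact_mod_cast hk).trans (two_pow_half_succ_le j)
    calc |(k:ℝ)| * 2 ^ ((j:ℝ) / 2) ≤ 2 * 2 ^ ((j:ℝ) / 2) * 2 ^ ((j:ℝ) / 2) := by gcongr
      _ = 2 * 2 ^ (j:ℝ) := by rw [mul_assoc, two_rpow_half_mul_self]
  have hhalf : (2:ℝ) ^ ((j:ℝ) / 2) ≤ 2 ^ (j:ℝ) :=
    Real.rpow_le_rpow_of_exponent_le one_le_two (by linarith [(j.cast_nonneg : (0:ℝ) ≤ j)])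
  have h₁ : |x.1| ≤ ‖x‖ := norm_fst_le x
  have h₂ : |x.2| ≤ ‖x‖ := norm_snd_le x
  rw [norm_prod_le_iff, Real.norm_eq_abs, Real.norm_eq_abs]
  constructor
  · calc |2 ^ (j:ℝ) * x.1 + k * 2 ^ ((j:ℝ) / 2) * x.2|
        ≤ 2 ^ (j:ℝ) * |x.1| + |(k:ℝ)| * 2 ^ ((j:ℝ) / 2) * |x.2| := by
          refine (abs_add_le _ _).trans_eq ?_
          rw [abs_mul, abs_mul, abs_mul, abs_of_pos (by positivity),
            abs_of_pos (show (0:ℝ) < 2 ^ ((j:ℝ) / 2) by positivity)]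
      _ ≤ 2 ^ (j:ℝ) * ‖x‖ + 2 * 2 ^ (j:ℝ) * ‖x‖ := by gcongr
      _ = 3 * 2 ^ (j:ℝ) * ‖x‖ := by ring
  · show |2 ^ ((j:ℝ) / 2) * x.2| ≤ _
    rw [abs_mul, abs_of_pos (by positivity)]
    calc 2 ^ ((j:ℝ) / 2) * |x.2| ≤ 2 ^ (j:ℝ) * ‖x‖ := by gcongr
      _ ≤ 3 * 2 ^ (j:ℝ) * ‖x‖ := by nlinarith [norm_nonneg x, Real.rpow_pos_of_pos two_pos (j:ℝ)]

theorem tsupport_shearEl_one_subset {ψ : ℝ × ℝ → ℝ} {R : ℝ}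
    (hR : tsupport ψ ⊆ Metric.closedBall 0 R) (c₁ c₂ : ℝ) (j : ℕ) (k : ℤ) (m : ℤ × ℤ) :
    tsupport (shearEl ψ c₁ c₂ j k m 1) ⊆
      {x | ‖shearScale j k x - latticePt c₁ c₂ m‖ ≤ R} := by
  rw [shearEl_one_eq]
  refine tsupport_mul_subset_right.trans <| (tsupport_comp_subset_preimage ψ
    (f := fun x => shearScale j k x - latticePt c₁ c₂ m) ?_).trans fun x hx => ?_
  · exact (continuous_shearScale j k).sub continuous_const
  · simpa using hR hx

theorem LipschitzWith.exists_dist_le_of_periodic {X : Type*} [PseudoMetricSpace X]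
    {γ : ℝ → X} {K : NNReal} {len : ℝ} (hγ : LipschitzWith K γ)
    (hper : Function.Periodic γ len) (hlen : 0 < len) {N : ℕ} (hN : 0 < N) (s : ℝ) :
    ∃ i ∈ Finset.range N, dist (γ s) (γ (i * (len / N))) ≤ K * (len / N) := by
  obtain ⟨t, ⟨ht₀, htlen⟩, hγt⟩ := hper.exists_mem_Ico₀ hlen s
  have hh : 0 < len / N := by positivity
  have hfloor := Nat.floor_le (div_nonneg ht₀ hh.le)
  have hfloor' := Nat.lt_floor_add_one (t / (len / N))
  refine ⟨⌊t / (len / N)⌋₊, ?_, ?_⟩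
  · rw [Finset.mem_range, Nat.floor_lt (div_nonneg ht₀ hh.le), div_lt_iff₀ hh,
      mul_div_cancel₀ _ (by positivity)]
    exact htlen
  · rw [hγt]
    refine (hγ.dist_le_mul _ _).trans (mul_le_mul_of_nonneg_left ?_ K.coe_nonneg)
    rw [Real.dist_eq, abs_le]
    rw [le_div_iff₀ hh] at hfloor
    rw [div_lt_iff₀ hh] at hfloor'
    constructor <;> nlinarith

theorem abs_mul_sub_le_iff_mem_Icc {c : ℝ} (hc : 0 < c) {z r : ℝ} {n : ℤ} :
    |c * n - z| ≤ r ↔ n ∈ Finset.Icc ⌈(z - r) / c⌉ ⌊(z + r) / c⌋ := by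
  rw [abs_sub_le_iff, Finset.mem_Icc, Int.ceil_le, Int.le_floor, div_le_iff₀ hc, le_div_iff₀ hc]
  constructor <;> rintro ⟨h₁, h₂⟩ <;> constructor <;> linarith

theorem card_Icc_ceil_floor_le {c : ℝ} (hc : 0 < c) (z : ℝ) {r : ℝ} (hr : 0 ≤ r) :
    ((Finset.Icc ⌈(z - r) / c⌉ ⌊(z + r) / c⌋).card : ℝ) ≤ 2 * r / c + 1 := by
  rw [Int.card_Icc, ← Int.cast_natCast, Int.toNat_eq_max, Int.cast_max, max_le_iff]
  refine ⟨?_, by push_cast; positivity⟩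
  push_cast
  have : 2 * r / c = (z + r) / c - (z - r) / c := by ring
  linarith [Int.floor_le ((z + r) / c), Int.le_ceil ((z - r) / c)]

def latticeBox (c₁ c₂ : ℝ) (z : ℝ × ℝ) (r : ℝ) : Finset (ℤ × ℤ) :=
  Finset.Icc ⌈(z.1 - r) / c₁⌉ ⌊(z.1 + r) / c₁⌋ ×ˢ Finset.Icc ⌈(z.2 - r) / c₂⌉ ⌊(z.2 + r) / c₂⌋

theorem mem_latticeBox {c₁ c₂ : ℝ} (hc₁ : 0 < c₁) (hc₂ : 0 < c₂) {z : ℝ × ℝ} {r : ℝ}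
    {m : ℤ × ℤ} : m ∈ latticeBox c₁ c₂ z r ↔ ‖latticePt c₁ c₂ m - z‖ ≤ r := by
  rw [latticeBox, Finset.mem_product, norm_prod_le_iff, ← abs_mul_sub_le_iff_mem_Icc hc₁,
    ← abs_mul_sub_le_iff_mem_Icc hc₂]
  rfl

theorem card_latticeBox_le {c₁ c₂ : ℝ} (hc₁ : 0 < c₁) (hc₂ : 0 < c₂) (z : ℝ × ℝ) {r : ℝ}
    (hr : 0 ≤ r) :
    ((latticeBox c₁ c₂ z r).card : ℝ) ≤ (2 * r / c₁ + 1) * (2 * r / c₂ + 1) := by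
  rw [latticeBox, Finset.card_product, Nat.cast_mul]
  exact mul_le_mul (card_Icc_ceil_floor_le hc₁ _ hr) (card_Icc_ceil_floor_le hc₂ _ hr)
    (Nat.cast_nonneg _) (by positivity)

theorem mem_latticeBox_of_mem_tsupport_shearEl {ψ : ℝ × ℝ → ℝ} {R c₁ c₂ : ℝ}
    (hR : tsupport ψ ⊆ Metric.closedBall 0 R) (hc₁ : 0 < c₁) (hc₂ : 0 < c₂) {j : ℕ} {k : ℤ}
    (hk : |k| ≤ 2 ^ ((j + 1) / 2)) {m : ℤ × ℤ} {x y : ℝ × ℝ}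
    (hx : x ∈ tsupport (shearEl ψ c₁ c₂ j k m 1)) (hxy : ‖x - y‖ ≤ (2 ^ (j:ℝ))⁻¹) :
    m ∈ latticeBox c₁ c₂ (shearScale j k y) (R + 3) := by
  rw [mem_latticeBox hc₁ hc₂]
  have hxm : ‖shearScale j k x - latticePt c₁ c₂ m‖ ≤ R :=
    tsupport_shearEl_one_subset hR c₁ c₂ j k m hx
  have hxy' : ‖shearScale j k x - shearScale j k y‖ ≤ 3 := by
    rw [shearScale_sub]
    calc _ ≤ 3 * 2 ^ (j:ℝ) * ‖x - y‖ := norm_shearScale_le hk _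
      _ ≤ 3 * 2 ^ (j:ℝ) * (2 ^ (j:ℝ))⁻¹ := by gcongr
      _ = 3 := by field_simp
  calc ‖latticePt c₁ c₂ m - shearScale j k y‖
      ≤ ‖latticePt c₁ c₂ m - shearScale j k x‖ + ‖shearScale j k x - shearScale j k y‖ :=
        norm_sub_le_norm_sub_add_norm_sub _ _ _
    _ ≤ R + 3 := add_le_add (by rwa [norm_sub_rev]) hxy'

theorem finite_and_natCard_le_of_subset_biUnion {α β : Type*} [DecidableEq β] {S : Set β}
    {s : Finset α} {t : α → Finset β} {M : ℝ} (hS : S ⊆ ↑(s.biUnion t))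
    (ht : ∀ a ∈ s, ((t a).card : ℝ) ≤ M) :
    S.Finite ∧ (Nat.card S : ℝ) ≤ s.card * M := by
  refine ⟨(Finset.finite_toSet _).subset hS, ?_⟩
  rw [Nat.card_coe_set_eq]
  calc (S.ncard : ℝ) ≤ (s.biUnion t).card := by
        exact_mod_cast (Set.ncard_le_ncard hS (Finset.finite_toSet _)).trans_eq
          (Set.ncard_coe_finset _)
    _ ≤ ∑ a ∈ s, ((t a).card : ℝ) := by exact_mod_cast Finset.card_biUnion_le
    _ ≤ ∑ _a ∈ s, M := Finset.sum_le_sum ht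
    _ = s.card * M := by rw [Finset.sum_const, nsmul_eq_mul]

theorem setOf_meeting_curve_subset_biUnion {ψ : ℝ × ℝ → ℝ} {R c₁ c₂ len : ℝ}
    (hR : tsupport ψ ⊆ Metric.closedBall 0 R) (hc₁ : 0 < c₁) (hc₂ : 0 < c₂)
    {γ : ℝ → ℝ × ℝ} (hlip : LipschitzWith 1 γ) (hper : Function.Periodic γ len)
    (hlen : 0 < len) (j : ℕ) :
    {km : ℤ × (ℤ × ℤ) | |km.1| ≤ 2 ^ ((j + 1) / 2) ∧
      (tsupport (shearEl ψ c₁ c₂ j km.1 km.2 1) ∩ range γ).Nonempty} ⊆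
      ↑((Finset.Icc (-(2:ℤ) ^ ((j + 1) / 2)) (2 ^ ((j + 1) / 2)) ×ˢ
          Finset.range ⌈len * 2 ^ (j:ℝ)⌉₊).biUnion fun p =>
        (latticeBox c₁ c₂ (shearScale j p.1 (γ (p.2 * (len / ⌈len * 2 ^ (j:ℝ)⌉₊)))) (R + 3)).image
          (Prod.mk p.1)) := by
  set N := ⌈len * 2 ^ (j:ℝ)⌉₊
  have hN : 0 < N := Nat.ceil_pos.mpr (by positivity)
  have hstep : len / N ≤ (2 ^ (j:ℝ))⁻¹ := by
    rw [div_le_iff₀ (by positivity), inv_mul_eq_div, le_div_iff₀ (by positivity)]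
    exact Nat.le_ceil _
  rintro ⟨k, m⟩ ⟨hk, x, hxψ, s, rfl⟩
  obtain ⟨i, hi, hdist⟩ := hlip.exists_dist_le_of_periodic hper hlen hN s
  rw [NNReal.coe_one, one_mul, dist_eq_norm] at hdist
  simp only [Finset.coe_biUnion, Set.mem_iUnion, Finset.mem_coe, Finset.mem_product,
    Finset.mem_Icc, Finset.mem_image, Prod.mk.injEq]
  exact ⟨(k, i), ⟨abs_le.mp hk, hi⟩, m,
    mem_latticeBox_of_mem_tsupport_shearEl hR hc₁ hc₂ hk hxψ (hdist.trans hstep), rfl, rfl⟩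

theorem count_shearlets_meeting_curve_general
    (len : ℝ) (hlen : 0 < len) (γ : ℝ → ℝ × ℝ)
    (hγsm : ContDiff ℝ 2 γ) (hγper : Function.Periodic γ len)
    (hγspeed : ∀ t, ‖deriv γ t‖ = 1)
    (ψ : ℝ × ℝ → ℝ)
    (hψcs : HasCompactSupport ψ)
    (c₁ c₂ : ℝ) (hc₁ : 0 < c₁) (hc₂ : 0 < c₂) :
    ∃ C : ℝ, 0 < C ∧ ∀ j : ℕ,
      {km : ℤ × (ℤ × ℤ) | |km.1| ≤ 2 ^ ((j + 1) / 2) ∧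
        (tsupport (shearEl ψ c₁ c₂ j km.1 km.2 1) ∩ range γ).Nonempty}.Finite ∧
      (Nat.card {km : ℤ × (ℤ × ℤ) | |km.1| ≤ 2 ^ ((j + 1) / 2) ∧
        (tsupport (shearEl ψ c₁ c₂ j km.1 km.2 1) ∩ range γ).Nonempty} : ℝ) ≤
        C * (2:ℝ) ^ (3 * (j:ℝ) / 2) := by
  obtain ⟨R, hR₀, hR⟩ := hψcs.isBounded.subset_closedBall_lt 0 0
  have hlip : LipschitzWith 1 γ :=
    lipschitzWith_of_nnnorm_deriv_le (hγsm.differentiable two_ne_zero) fun t => by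
      rw [← NNReal.coe_le_coe, coe_nnnorm, hγspeed, NNReal.coe_one]
  set B := (2 * (R + 3) / c₁ + 1) * (2 * (R + 3) / c₂ + 1)
  refine ⟨5 * (len + 1) * B, by positivity, fun j => ?_⟩
  obtain ⟨hfin, hcard⟩ := finite_and_natCard_le_of_subset_biUnion
    (setOf_meeting_curve_subset_biUnion hR hc₁ hc₂ hlip hγper hlen j) fun p _ =>
    (Nat.cast_le.mpr Finset.card_image_le).trans (card_latticeBox_le hc₁ hc₂ _ (by linarith))
  refine ⟨hfin, hcard.trans ?_⟩
  rw [Finset.card_product, Finset.card_range, Nat.cast_mul]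
  calc _ ≤ 5 * 2 ^ ((j:ℝ) / 2) * ((len + 1) * 2 ^ (j:ℝ)) * B := by
        gcongr
        exacts [card_Icc_two_pow_half_succ_le j, natCeil_mul_two_rpow_le hlen.le j]
    _ = 5 * (len + 1) * B * (2:ℝ) ^ (3 * (j:ℝ) / 2) := by
        rw [show 3 * (j:ℝ) / 2 = (j:ℝ) / 2 + j by ring, Real.rpow_add two_pos]
        ring

/-- at scale `j`, at most `C·2^{3j/2}` shearlet indices `(k,m)` in one
frequency cone have support meeting a fixed discontinuity curve `Γ`. -/
theorem count_shearlets_meeting_curve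
    (len v : ℝ) (hlen : 0 < len) (γ : ℝ → ℝ × ℝ)
    (hγsm : ContDiff ℝ 2 γ) (hγper : Function.Periodic γ len)
    (hγinj : ∀ s ∈ Ico (0:ℝ) len, ∀ t ∈ Ico (0:ℝ) len, γ s = γ t → s = t)
    (hγspeed : ∀ t, ‖deriv γ t‖ = 1)
    (hγcurv : ∀ t, ‖deriv (deriv γ) t‖ ≤ v)
    (hγrange : range γ ⊆ unitSq)
    (ψ : ℝ × ℝ → ℝ)
    (hψ : MemLp ψ 2 (volume : Measure (ℝ × ℝ)))
    (hψcs : HasCompactSupport ψ)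
    (c₁ c₂ : ℝ) (hc₁ : 0 < c₁) (hc₂ : 0 < c₂) :
    ∃ C : ℝ, 0 < C ∧ ∀ j : ℕ,
      {km : ℤ × (ℤ × ℤ) | |km.1| ≤ 2 ^ ((j + 1) / 2) ∧
        (tsupport (shearEl ψ c₁ c₂ j km.1 km.2 1) ∩ range γ).Nonempty}.Finite ∧
      (Nat.card {km : ℤ × (ℤ × ℤ) | |km.1| ≤ 2 ^ ((j + 1) / 2) ∧
        (tsupport (shearEl ψ c₁ c₂ j km.1 km.2 1) ∩ range γ).Nonempty} : ℝ) ≤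
        C * (2:ℝ) ^ (3 * (j:ℝ) / 2) :=
  count_shearlets_meeting_curve_general len hlen γ hγsm hγper hγspeed ψ hψcs c₁ c₂ hc₁ hc₂
end
end
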